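/- arXiv:2409.07142 — 2 statements merged into one kernel-verified Lean document; each statement's English description precedes it below -/
import Mathlib

section
/- Let f be a randomized mechanism for two agents on the line that is truthful in expectation. Define f′ by f′(x₁,x₂) = T_{x_L,x_R}(f(x₁,x₂)) whenever x₁ ≠ x₂ (where x_L = min(x₁,x₂) and x_R = max(x₁,x₂)), and f′(x,x) = f(x,x). Then f′ is truthful in expectation. -/
open MeasureTheory

/-- The transformation `T` from the paper: given `x_L < x_R` with midpoint
`M = (x_L+x_R)/2` and a measure `μ`, the transformed measure agrees with `μ` outside
`[x_L, x_R]`, assigns measure zero to `(x_L,M) ∪ (M,x_R)`, and moves the mass `p_ℓ` of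
`(x_L,M)` (with conditional mean `π_ℓ = q_ℓ x_L + (1-q_ℓ) M`) onto the points `x_L` and
`M` with weights `q_ℓ p_ℓ` and `(1-q_ℓ) p_ℓ`, and symmetrically the mass `p_r` of
`(M,x_R)` onto `x_R` and `M`. (When `p_ℓ = 0` the products `q_ℓ p_ℓ` and `(1-q_ℓ) p_ℓ`
vanish, and similarly on the right.) -/
noncomputable def Tmeas (xL xR : ℝ) (μ : Measure ℝ) : Measure ℝ :=
  let M := (xL + xR) / 2
  let pl := (μ (Set.Ioo xL M)).toReal
  let pr := (μ (Set.Ioo M xR)).toReal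
  let πl := (∫ y in Set.Ioo xL M, y ∂μ) / pl
  let πr := (∫ y in Set.Ioo M xR, y ∂μ) / pr
  let ql := (M - πl) / (M - xL)
  let qr := (πr - M) / (xR - M)
  μ.restrict (Set.Iio xL ∪ Set.Ioi xR)
    + (μ {xL} + ENNReal.ofReal (ql * pl)) • Measure.dirac xL
    + (μ {M} + ENNReal.ofReal ((1 - ql) * pl + (1 - qr) * pr)) • Measure.dirac M
    + (μ {xR} + ENNReal.ofReal (qr * pr)) • Measure.dirac xR


/-- A randomized mechanism for two agents on the line is truthful in expectation. -/
def TruthfulInExpectation (f : ℝ × ℝ → Measure ℝ) : Prop :=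
  (∀ x₁ x₂ x₁' : ℝ,
    ∫ y, |y - x₁| ∂(f (x₁, x₂)) ≤ ∫ y, |y - x₁| ∂(f (x₁', x₂))) ∧
  (∀ x₁ x₂ x₂' : ℝ,
    ∫ y, |y - x₂| ∂(f (x₁, x₂)) ≤ ∫ y, |y - x₂| ∂(f (x₁, x₂')))

/-!
For a fixed location `t`, the cost `y ↦ |y - t|` is convex, so on an interval `(a, b)` it lies
below its chord through `a` and `b`, and coincides with it when `t ∉ (a, b)`. The measure
`Tmeas x_L x_R μ` replaces `μ` on each of `(x_L, M)` and `(M, x_R)` by the distribution on the two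
endpoints with the same mass and mean, which integrates chords exactly. Hence the expected cost of
every location can only grow under `T`, and it is unchanged for `t ∉ (x_L, x_R)`, in particular at
the two reports. Truthfulness survives: the truthful cost is unchanged and the cost of a
misreport can only grow.
-/

open Set ENNReal

lemma abs_sub_le_secant {a b y : ℝ} (t : ℝ) (hy : y ∈ Ioo a b) :
    |y - t| ≤ ((b - y) * |a - t| + (y - a) * |b - t|) / (b - a) := by
  have hab : 0 < b - a := by linarith [hy.1, hy.2]
  rw [le_div_iff₀ hab]
  calc |y - t| * (b - a) = |(b - y) * (a - t) + (y - a) * (b - t)| := by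
        rw [← abs_of_pos hab, ← abs_mul]; ring_nf
    _ ≤ |(b - y) * (a - t)| + |(y - a) * (b - t)| := abs_add_le _ _
    _ = (b - y) * |a - t| + (y - a) * |b - t| := by
        rw [abs_mul, abs_mul, abs_of_pos (sub_pos.2 hy.2), abs_of_pos (sub_pos.2 hy.1)]

lemma abs_sub_eq_secant {a b y t : ℝ} (ht : t ∉ Ioo a b) (hy : y ∈ Ioo a b) :
    |y - t| = ((b - y) * |a - t| + (y - a) * |b - t|) / (b - a) := by
  have hab : b - a ≠ 0 := by linarith [hy.1, hy.2]
  rw [eq_div_iff hab]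
  rcases le_or_gt t a with hta | hat
  · rw [abs_of_nonneg (by linarith [hy.1]), abs_of_nonneg (by linarith),
      abs_of_nonneg (by linarith [hy.1, hy.2])]
    ring
  · have htb : b ≤ t := not_lt.1 fun htb => ht ⟨hat, htb⟩
    rw [abs_of_nonpos (by linarith [hy.2]), abs_of_nonpos (by linarith),
      abs_of_nonpos (by linarith)]
    ring

lemma sub_div_div_mul_eq {c I p d : ℝ} (h : p = 0 → I = 0) :
    (c - I / p) / d * p = (c * p - I) / d := by
  rw [div_mul_eq_mul_div, sub_mul, div_mul_cancel_of_imp h]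

section Dirac

variable {α : Type*} [MeasurableSpace α] [MeasurableSingletonClass α] {ν : Measure α}
  {g : α → ℝ} {c : ℝ≥0∞}

lemma integrable_add_smul_dirac (hg : Integrable g ν) (hc : c ≠ ∞) (x : α) :
    Integrable g (ν + c • Measure.dirac x) :=
  hg.add_measure ((integrable_dirac enorm_lt_top).smul_measure hc)

lemma integral_add_smul_dirac (hg : Integrable g ν) (hc : c ≠ ∞) (x : α) :
    ∫ y, g y ∂(ν + c • Measure.dirac x) = ∫ y, g y ∂ν + c.toReal * g x := by
  rw [integral_add_measure hg ((integrable_dirac enorm_lt_top).smul_measure hc),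
    integral_smul_measure, integral_dirac, smul_eq_mul]

end Dirac

/-- `lowerEndMass μ a b` and `upperEndMass μ a b` are the masses at `a` and `b` of the
distribution on `{a, b}` with the same mass and mean as `μ` on `(a, b)`; for `(a, b) = (x_L, M)`
they are the paper's `q_ℓ p_ℓ` and `(1 - q_ℓ) p_ℓ`. -/
noncomputable def lowerEndMass (μ : Measure ℝ) (a b : ℝ) : ℝ :=
  (b * μ.real (Ioo a b) - ∫ y in Ioo a b, y ∂μ) / (b - a)

noncomputable def upperEndMass (μ : Measure ℝ) (a b : ℝ) : ℝ :=
  ((∫ y in Ioo a b, y ∂μ) - a * μ.real (Ioo a b)) / (b - a)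

lemma lowerEndMass_add_upperEndMass {μ : Measure ℝ} {a b : ℝ} (hab : a < b) :
    lowerEndMass μ a b + upperEndMass μ a b = μ.real (Ioo a b) := by
  rw [lowerEndMass, upperEndMass, ← add_div, div_eq_iff (sub_pos.2 hab).ne']
  ring

section EndMass

variable {μ : Measure ℝ} [IsFiniteMeasure μ] {a b : ℝ}

lemma integrable_secant (hμ : Integrable (fun y => y) μ) (u v : ℝ) :
    Integrable (fun y => ((b - y) * u + (y - a) * v) / (b - a)) μ :=
  ((((integrable_const b).sub hμ).mul_const u).add
    ((hμ.sub (integrable_const a)).mul_const v)).div_const _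

lemma setIntegral_secant (hμ : Integrable (fun y => y) μ) (u v : ℝ) :
    ∫ y in Ioo a b, ((b - y) * u + (y - a) * v) / (b - a) ∂μ
      = lowerEndMass μ a b * u + upperEndMass μ a b * v := by
  have hid := hμ.integrableOn (s := Ioo a b)
  have hc : ∀ c : ℝ, IntegrableOn (fun _ => c) (Ioo a b) μ := fun c => integrableOn_const
  have hl : IntegrableOn (fun y => (b - y) * u) (Ioo a b) μ := ((hc b).sub hid).mul_const u
  have hr : IntegrableOn (fun y => (y - a) * v) (Ioo a b) μ := (hid.sub (hc a)).mul_const v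
  rw [integral_div, integral_add hl hr, integral_mul_const, integral_mul_const,
    integral_sub (hc b) hid, integral_sub hid (hc a),
    setIntegral_const, setIntegral_const, lowerEndMass, upperEndMass]
  simp only [smul_eq_mul]
  ring

lemma lowerEndMass_nonneg (hμ : Integrable (fun y => y) μ) : 0 ≤ lowerEndMass μ a b := by
  have h := setIntegral_secant (a := a) (b := b) hμ 1 0
  simp only [mul_one, mul_zero, add_zero] at h
  rw [← h]
  exact setIntegral_nonneg measurableSet_Ioo fun y hy =>
    div_nonneg (by linarith [hy.2]) (by linarith [hy.1, hy.2])

lemma upperEndMass_nonneg (hμ : Integrable (fun y => y) μ) : 0 ≤ upperEndMass μ a b := by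
  have h := setIntegral_secant (a := a) (b := b) hμ 0 1
  simp only [mul_one, mul_zero, zero_add] at h
  rw [← h]
  exact setIntegral_nonneg measurableSet_Ioo fun y hy =>
    div_nonneg (by linarith [hy.1]) (by linarith [hy.1, hy.2])

lemma setIntegral_abs_sub_le (hμ : Integrable (fun y => y) μ) (t : ℝ) :
    ∫ y in Ioo a b, |y - t| ∂μ ≤ lowerEndMass μ a b * |a - t| + upperEndMass μ a b * |b - t| := by
  rw [← setIntegral_secant hμ]
  exact setIntegral_mono_on (hμ.sub (integrable_const t)).abs.integrableOn
    (integrable_secant hμ _ _).integrableOn measurableSet_Ioo fun y hy => abs_sub_le_secant t hy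

lemma setIntegral_abs_sub_eq (hμ : Integrable (fun y => y) μ) {t : ℝ} (ht : t ∉ Ioo a b) :
    ∫ y in Ioo a b, |y - t| ∂μ = lowerEndMass μ a b * |a - t| + upperEndMass μ a b * |b - t| := by
  rw [← setIntegral_secant hμ]
  exact setIntegral_congr_fun measurableSet_Ioo fun y hy => abs_sub_eq_secant ht hy

end EndMass

section Transform

variable (μ : Measure ℝ) [IsFiniteMeasure μ] {xL xR : ℝ}

lemma Tmeas_eq (hx : xL < xR) :
    Tmeas xL xR μ = μ.restrict (Iio xL ∪ Ioi xR)
      + (μ {xL} + ENNReal.ofReal (lowerEndMass μ xL ((xL + xR) / 2))) • Measure.dirac xL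
      + (μ {(xL + xR) / 2} + ENNReal.ofReal (upperEndMass μ xL ((xL + xR) / 2)
          + lowerEndMass μ ((xL + xR) / 2) xR)) • Measure.dirac ((xL + xR) / 2)
      + (μ {xR} + ENNReal.ofReal (upperEndMass μ ((xL + xR) / 2) xR)) • Measure.dirac xR := by
  set M := (xL + xR) / 2
  -- an interval of mass zero has integral zero, so the junk value `I / 0 = 0` is harmless
  have hzero : ∀ c d, μ.real (Ioo c d) = 0 → ∫ y in Ioo c d, y ∂μ = 0 := fun c d h =>
    setIntegral_measure_zero _ ((measureReal_eq_zero_iff (measure_ne_top _ _)).1 h)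
  have hl : (M - (∫ y in Ioo xL M, y ∂μ) / μ.real (Ioo xL M)) / (M - xL) * μ.real (Ioo xL M)
      = lowerEndMass μ xL M := by
    rw [sub_div_div_mul_eq (hzero _ _), lowerEndMass]
  have hr : ((∫ y in Ioo M xR, y ∂μ) / μ.real (Ioo M xR) - M) / (xR - M) * μ.real (Ioo M xR)
      = upperEndMass μ M xR := by
    rw [← neg_sub M, neg_div, neg_mul, sub_div_div_mul_eq (hzero _ _), upperEndMass]
    ring
  have hmid : (1 - (M - (∫ y in Ioo xL M, y ∂μ) / μ.real (Ioo xL M)) / (M - xL))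
        * μ.real (Ioo xL M)
      + (1 - ((∫ y in Ioo M xR, y ∂μ) / μ.real (Ioo M xR) - M) / (xR - M)) * μ.real (Ioo M xR)
      = upperEndMass μ xL M + lowerEndMass μ M xR := by
    linear_combination -lowerEndMass_add_upperEndMass (μ := μ) (left_lt_add_div_two.2 hx)
      - lowerEndMass_add_upperEndMass (μ := μ) (add_div_two_lt_right.2 hx) - hl - hr
  simp only [Tmeas, ← measureReal_def]
  rw [hl, hr, hmid]

lemma integral_Tmeas (hx : xL < xR) (hμ : Integrable (fun y => y) μ) {g : ℝ → ℝ}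
    (hg : Integrable g μ) :
    ∫ y, g y ∂(Tmeas xL xR μ) = (∫ y in Iio xL ∪ Ioi xR, g y ∂μ)
      + (μ.real {xL} + lowerEndMass μ xL ((xL + xR) / 2)) * g xL
      + (μ.real {(xL + xR) / 2} + (upperEndMass μ xL ((xL + xR) / 2)
          + lowerEndMass μ ((xL + xR) / 2) xR)) * g ((xL + xR) / 2)
      + (μ.real {xR} + upperEndMass μ ((xL + xR) / 2) xR) * g xR := by
  have hfin : ∀ (s : Set ℝ) (r : ℝ), μ s + ENNReal.ofReal r ≠ ∞ := fun s r =>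
    add_ne_top.2 ⟨measure_ne_top _ _, ofReal_ne_top⟩
  have hreal : ∀ (s : Set ℝ) {r : ℝ}, 0 ≤ r → (μ s + ENNReal.ofReal r).toReal = μ.real s + r :=
    fun s r hr => by rw [toReal_add (measure_ne_top _ _) ofReal_ne_top, toReal_ofReal hr,
      measureReal_def]
  rw [Tmeas_eq μ hx,
    integral_add_smul_dirac (integrable_add_smul_dirac
      (integrable_add_smul_dirac hg.restrict (hfin _ _) _) (hfin _ _) _) (hfin _ _),
    integral_add_smul_dirac (integrable_add_smul_dirac hg.restrict (hfin _ _) _) (hfin _ _),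
    integral_add_smul_dirac hg.restrict (hfin _ _),
    hreal _ (lowerEndMass_nonneg hμ), hreal _ (upperEndMass_nonneg hμ),
    hreal _ (add_nonneg (upperEndMass_nonneg hμ) (lowerEndMass_nonneg hμ))]

omit [IsFiniteMeasure μ] in
lemma integral_eq_outside_add_Icc_pieces {g : ℝ → ℝ} (hg : Integrable g μ) {M : ℝ}
    (hLM : xL < M) (hMR : M < xR) :
    ∫ y, g y ∂μ = (∫ y in Iio xL ∪ Ioi xR, g y ∂μ) + μ.real {xL} * g xL
      + (∫ y in Ioo xL M, g y ∂μ) + μ.real {M} * g M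
      + (∫ y in Ioo M xR, g y ∂μ) + μ.real {xR} * g xR := by
  have hIci : ∀ c : ℝ, ∫ y in Ici c, g y ∂μ = μ.real {c} * g c + ∫ y in Ioi c, g y ∂μ := by
    intro c
    rw [← Ioi_insert, ← singleton_union, setIntegral_union (by simp) measurableSet_Ioi
      hg.integrableOn hg.integrableOn, integral_singleton, smul_eq_mul]
  have hIoi : ∀ {c d : ℝ}, c < d →
      ∫ y in Ioi c, g y ∂μ = (∫ y in Ioo c d, g y ∂μ) + ∫ y in Ici d, g y ∂μ := fun hcd => by
    rw [← Ioo_union_Ici_eq_Ioi hcd, setIntegral_union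
      ((Iio_disjoint_Ici le_rfl).mono_left Ioo_subset_Iio_self) measurableSet_Ici
      hg.integrableOn hg.integrableOn]
  have hout : ∫ y in Iio xL ∪ Ioi xR, g y ∂μ
      = (∫ y in Iio xL, g y ∂μ) + ∫ y in Ioi xR, g y ∂μ :=
    setIntegral_union (disjoint_left.2 fun y hy hy' => by
      linarith [mem_Iio.1 hy, mem_Ioi.1 hy']) measurableSet_Ioi hg.integrableOn hg.integrableOn
  rw [← integral_add_compl measurableSet_Iio hg, compl_Iio, hIci xL, hIoi hLM, hIci M,
    hIoi hMR, hIci xR, hout]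
  ring

lemma integral_abs_sub_le_integral_Tmeas (hx : xL < xR) (hμ : Integrable (fun y => y) μ)
    (t : ℝ) : ∫ y, |y - t| ∂μ ≤ ∫ y, |y - t| ∂(Tmeas xL xR μ) := by
  have hg : Integrable (fun y => |y - t|) μ := (hμ.sub (integrable_const t)).abs
  rw [integral_Tmeas μ hx hμ hg, integral_eq_outside_add_Icc_pieces μ hg
    (left_lt_add_div_two.2 hx) (add_div_two_lt_right.2 hx)]
  linarith [setIntegral_abs_sub_le (a := xL) (b := (xL + xR) / 2) hμ t,
    setIntegral_abs_sub_le (a := (xL + xR) / 2) (b := xR) hμ t]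

lemma integral_Tmeas_abs_sub_of_notMem (hx : xL < xR) (hμ : Integrable (fun y => y) μ)
    {t : ℝ} (ht : t ∉ Ioo xL xR) : ∫ y, |y - t| ∂(Tmeas xL xR μ) = ∫ y, |y - t| ∂μ := by
  have hg : Integrable (fun y => |y - t|) μ := (hμ.sub (integrable_const t)).abs
  have htL : t ∉ Ioo xL ((xL + xR) / 2) := fun h => ht ⟨h.1, by linarith [h.2]⟩
  have htR : t ∉ Ioo ((xL + xR) / 2) xR := fun h => ht ⟨by linarith [h.1], h.2⟩
  rw [integral_Tmeas μ hx hμ hg, integral_eq_outside_add_Icc_pieces μ hg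
    (left_lt_add_div_two.2 hx) (add_div_two_lt_right.2 hx),
    setIntegral_abs_sub_eq hμ htL, setIntegral_abs_sub_eq hμ htR]
  ring

end Transform

noncomputable def transformMechanism (f : ℝ × ℝ → Measure ℝ) (x : ℝ × ℝ) : Measure ℝ :=
  if x.1 = x.2 then f x else Tmeas (min x.1 x.2) (max x.1 x.2) (f x)

section Mechanism

variable (f : ℝ × ℝ → Measure ℝ) (x : ℝ × ℝ) [IsFiniteMeasure (f x)]

lemma integral_abs_sub_le_transformMechanism (hx : Integrable (fun y => y) (f x)) (t : ℝ) :
    ∫ y, |y - t| ∂(f x) ≤ ∫ y, |y - t| ∂(transformMechanism f x) := by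
  unfold transformMechanism
  split_ifs with h
  · exact le_rfl
  · exact integral_abs_sub_le_integral_Tmeas _ (min_lt_max.2 h) hx t

lemma integral_transformMechanism_abs_sub_of_eq (hx : Integrable (fun y => y) (f x)) {t : ℝ}
    (ht : t = x.1 ∨ t = x.2) :
    ∫ y, |y - t| ∂(transformMechanism f x) = ∫ y, |y - t| ∂(f x) := by
  unfold transformMechanism
  split_ifs with h
  · rfl
  · refine integral_Tmeas_abs_sub_of_notMem _ (min_lt_max.2 h) hx fun hmem => ?_
    rcases ht with rfl | rfl <;> simp only [mem_Ioo, min_lt_iff, lt_max_iff] at hmem <;>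
      rcases hmem with ⟨h1 | h1, h2 | h2⟩ <;> linarith

end Mechanism

/-- if `f` is truthful in expectation, then the mechanism `f'` obtained by
applying the transformation `T` to the output of `f` on every profile with two distinct
reports (and leaving `f` unchanged on profiles with coinciding reports) is also truthful
in expectation. -/
theorem stmt4 (f : ℝ × ℝ → Measure ℝ)
    (hprob : ∀ x, IsProbabilityMeasure (f x))
    (hmom : ∀ x, Integrable (fun y => |y|) (f x))
    (htruth : TruthfulInExpectation f)
    (f' : ℝ × ℝ → Measure ℝ)
    (hf' : ∀ x : ℝ × ℝ,
      f' x = if x.1 = x.2 then f x else Tmeas (min x.1 x.2) (max x.1 x.2) (f x)) :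
    TruthfulInExpectation f' := by
  obtain rfl : f' = transformMechanism f := funext hf'
  have hid : ∀ x, Integrable (fun y => y) (f x) := fun x =>
    (integrable_norm_iff aestronglyMeasurable_id).1 (hmom x)
  refine ⟨fun x₁ x₂ x₁' => ?_, fun x₁ x₂ x₂' => ?_⟩
  · calc _ = ∫ y, |y - x₁| ∂(f (x₁, x₂)) :=
          integral_transformMechanism_abs_sub_of_eq f _ (hid _) (Or.inl rfl)
      _ ≤ ∫ y, |y - x₁| ∂(f (x₁', x₂)) := htruth.1 x₁ x₂ x₁'
      _ ≤ _ := integral_abs_sub_le_transformMechanism f _ (hid _) x₁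
  · calc _ = ∫ y, |y - x₂| ∂(f (x₁, x₂)) :=
          integral_transformMechanism_abs_sub_of_eq f _ (hid _) (Or.inr rfl)
      _ ≤ ∫ y, |y - x₂| ∂(f (x₁, x₂')) := htruth.2 x₁ x₂ x₂'
      _ ≤ _ := integral_abs_sub_le_transformMechanism f _ (hid _) x₂
end

section
/- Let f be a randomized learning-augmented mechanism for two agents in the Euclidean plane that receives a profile x ∈ (ℝ²)² together with a prediction x̂ ∈ (ℝ²)² of both agents' locations, and that is truthful in expectation for every fixed prediction. If f is 1-consistent, i.e., C(f(x,x),x) ≤ opt(x) for every profile x, then f cannot be better than 2-robust: there exist a profile x with opt(x) > 0 and a prediction x̂ such that C(f(x,x̂),x) ≥ 2·opt(x). -/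
/-!
Take a profile `(a, b)` with `a ≠ b` and let `m` be its midpoint. Pointwise
`max (dist y a) (dist y b) ≥ dist a b / 2`, with equality only at `y = m` (strict convexity), so
1-consistency forces `f (a, b) (a, b)` to be the point mass at `m`. With the same prediction
`(a, b)`, an agent located at `m` can report `a` and obtain expected distance `0`; truthfulness
therefore forces `f (m, b) (a, b)` to be the point mass at `m` as well, whose cost on the profile
`(m, b)` is `dist m b = 2 * opt (m, b)`.
-/

open MeasureTheory

theorem half_dist_le_max_dist {X : Type*} [PseudoMetricSpace X] (a b y : X) :
    dist a b / 2 ≤ max (dist y a) (dist y b) := by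
  have := dist_triangle_left a b y
  have := le_max_left (dist y a) (dist y b)
  have := le_max_right (dist y a) (dist y b)
  linarith

theorem eq_midpoint_of_max_dist_le {V P : Type*} [NormedAddCommGroup V] [NormedSpace ℝ V]
    [StrictConvexSpace ℝ V] [MetricSpace P] [NormedAddTorsor V P] {a b y : P}
    (h : max (dist y a) (dist y b) ≤ dist a b / 2) : y = midpoint ℝ a b := by
  have hya := (le_max_left _ _).trans h
  have hyb := (le_max_right _ _).trans h
  have := dist_triangle_left a b y
  have hay : dist a y = dist a b / 2 := by rw [dist_comm]; linarith
  exact eq_midpoint_of_dist_eq_half hay (by linarith)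

section ProbabilityMeasure

variable {α : Type*} [MeasurableSpace α] {μ : Measure α}

theorem ae_eq_const_of_le_of_integral_le [IsProbabilityMeasure μ] {g : α → ℝ} {c : ℝ}
    (hg : Integrable g μ) (hle : ∀ᵐ y ∂μ, c ≤ g y) (hint : ∫ y, g y ∂μ ≤ c) :
    ∀ᵐ y ∂μ, g y = c := by
  have hnonneg : 0 ≤ᵐ[μ] fun y => g y - c := hle.mono fun y hy => sub_nonneg.2 hy
  have hzero : ∫ y, (g y - c) ∂μ = 0 := by
    refine le_antisymm ?_ (integral_nonneg_of_ae hnonneg)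
    rw [integral_sub hg (integrable_const c), integral_const]
    simpa using hint
  filter_upwards [(integral_eq_zero_iff_of_nonneg_ae hnonneg (hg.sub (integrable_const c))).1 hzero]
    with y hy
  exact sub_eq_zero.1 hy

theorem integral_eq_apply_of_ae_eq [IsProbabilityMeasure μ] {E : Type*} [NormedAddCommGroup E]
    [NormedSpace ℝ E] [CompleteSpace E] {c : α} (h : ∀ᵐ y ∂μ, y = c) (g : α → E) :
    ∫ y, g y ∂μ = g c := by
  rw [integral_congr_ae (h.mono fun y hy => congrArg g hy), integral_const]
  simp

end ProbabilityMeasure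

section NormedSpace

variable {E : Type*} [NormedAddCommGroup E] [MeasurableSpace E] [OpensMeasurableSpace E]
  {μ : Measure E}

theorem integrable_dist_const [IsFiniteMeasure μ] (hμ : Integrable (fun y => ‖y‖) μ) (c : E) :
    Integrable (fun y => dist y c) μ :=
  (hμ.add (integrable_const ‖c‖)).mono'
    (continuous_id.dist continuous_const).aestronglyMeasurable
    (Filter.Eventually.of_forall fun y => by
      rw [Real.norm_of_nonneg dist_nonneg, dist_eq_norm]
      exact norm_sub_le y c)

theorem integral_dist_eq_zero_iff [IsFiniteMeasure μ] (hμ : Integrable (fun y => ‖y‖) μ)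
    (c : E) : ∫ y, dist y c ∂μ = 0 ↔ ∀ᵐ y ∂μ, y = c := by
  rw [integral_eq_zero_iff_of_nonneg (fun _ => dist_nonneg) (integrable_dist_const hμ c)]
  simp only [Filter.EventuallyEq, Pi.zero_apply, dist_eq_zero]

theorem ae_eq_midpoint_of_integral_max_dist_le [NormedSpace ℝ E] [StrictConvexSpace ℝ E]
    [IsProbabilityMeasure μ] (hμ : Integrable (fun y => ‖y‖) μ) {a b : E}
    (h : ∫ y, max (dist y a) (dist y b) ∂μ ≤ dist a b / 2) :
    ∀ᵐ y ∂μ, y = midpoint ℝ a b := by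
  have hmax := (integrable_dist_const hμ a).sup (integrable_dist_const hμ b)
  filter_upwards [ae_eq_const_of_le_of_integral_le hmax
    (Filter.Eventually.of_forall (half_dist_le_max_dist a b)) h] with y hy
  exact eq_midpoint_of_max_dist_le hy.le

end NormedSpace

theorem stmt13_general
    (f : EuclideanSpace ℝ (Fin 2) × EuclideanSpace ℝ (Fin 2) →
      EuclideanSpace ℝ (Fin 2) × EuclideanSpace ℝ (Fin 2) →
      Measure (EuclideanSpace ℝ (Fin 2)))
    (hprob : ∀ x p, IsProbabilityMeasure (f x p))
    (hmom : ∀ x p, Integrable (fun y => ‖y‖) (f x p))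
    (htruth1 : ∀ (p : EuclideanSpace ℝ (Fin 2) × EuclideanSpace ℝ (Fin 2))
        (x₁ x₂ x₁' : EuclideanSpace ℝ (Fin 2)),
      ∫ y, dist y x₁ ∂(f (x₁, x₂) p) ≤ ∫ y, dist y x₁ ∂(f (x₁', x₂) p))
    (hcons : ∀ x : EuclideanSpace ℝ (Fin 2) × EuclideanSpace ℝ (Fin 2),
      ∫ y, max (dist y x.1) (dist y x.2) ∂(f x x) ≤ dist x.1 x.2 / 2) :
    ∃ x p : EuclideanSpace ℝ (Fin 2) × EuclideanSpace ℝ (Fin 2),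
      0 < dist x.1 x.2 / 2 ∧
      2 * (dist x.1 x.2 / 2) ≤ ∫ y, max (dist y x.1) (dist y x.2) ∂(f x p) := by
  obtain ⟨a, b, hab⟩ := exists_pair_ne (EuclideanSpace ℝ (Fin 2))
  set m := midpoint ℝ a b
  have := hprob (a, b) (a, b)
  have := hprob (m, b) (a, b)
  have h_at_pred : ∀ᵐ y ∂f (a, b) (a, b), y = m :=
    ae_eq_midpoint_of_integral_max_dist_le (hmom _ _) (hcons (a, b))
  have h_deviate : ∀ᵐ y ∂f (m, b) (a, b), y = m := by
    rw [← integral_dist_eq_zero_iff (hmom _ _)]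
    refine le_antisymm ?_ (integral_nonneg fun _ => dist_nonneg)
    calc ∫ y, dist y m ∂f (m, b) (a, b) ≤ ∫ y, dist y m ∂f (a, b) (a, b) := htruth1 _ m b a
      _ = 0 := (integral_dist_eq_zero_iff (hmom _ _) m).2 h_at_pred
  refine ⟨(m, b), (a, b), ?_, ?_⟩
  · simpa [m] using dist_pos.2 hab
  · rw [integral_eq_apply_of_ae_eq h_deviate]
    simp only [dist_self, max_eq_right dist_nonneg]
    linarith

/-- no randomized learning-augmented mechanism for two agents in the
Euclidean plane, augmented with a prediction of both agents' locations, that is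
truthful in expectation for every fixed prediction and 1-consistent, can be better
than 2-robust. -/
theorem stmt13
    (f : EuclideanSpace ℝ (Fin 2) × EuclideanSpace ℝ (Fin 2) →
      EuclideanSpace ℝ (Fin 2) × EuclideanSpace ℝ (Fin 2) →
      Measure (EuclideanSpace ℝ (Fin 2)))
    (hprob : ∀ x p, IsProbabilityMeasure (f x p))
    (hmom : ∀ x p, Integrable (fun y => ‖y‖) (f x p))
    (htruth1 : ∀ (p : EuclideanSpace ℝ (Fin 2) × EuclideanSpace ℝ (Fin 2))
        (x₁ x₂ x₁' : EuclideanSpace ℝ (Fin 2)),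
      ∫ y, dist y x₁ ∂(f (x₁, x₂) p) ≤ ∫ y, dist y x₁ ∂(f (x₁', x₂) p))
    (htruth2 : ∀ (p : EuclideanSpace ℝ (Fin 2) × EuclideanSpace ℝ (Fin 2))
        (x₁ x₂ x₂' : EuclideanSpace ℝ (Fin 2)),
      ∫ y, dist y x₂ ∂(f (x₁, x₂) p) ≤ ∫ y, dist y x₂ ∂(f (x₁, x₂') p))
    (hcons : ∀ x : EuclideanSpace ℝ (Fin 2) × EuclideanSpace ℝ (Fin 2),
      ∫ y, max (dist y x.1) (dist y x.2) ∂(f x x) ≤ dist x.1 x.2 / 2) :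
    ∃ x p : EuclideanSpace ℝ (Fin 2) × EuclideanSpace ℝ (Fin 2),
      0 < dist x.1 x.2 / 2 ∧
      2 * (dist x.1 x.2 / 2) ≤ ∫ y, max (dist y x.1) (dist y x.2) ∂(f x p) :=
  stmt13_general f hprob hmom htruth1 hcons
end
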